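/- Let (G,𝓟) be a relatively hyperbolic group with finite generating set S, let P ∈ 𝓟 with T = S ∩ P generating P, and suppose d_T(u,v) ≤ L·d_S(u,v) + L for all u, v ∈ P (L ≥ 1). Then for every r > L and every simple path γ in the Cayley graph Γ(G,S) lying in the r-neighborhood of P, with endpoints in P and length greater than r, there is a path γ' in Γ(P,T) with the same endpoints such that the Hausdorff distance between γ and γ' is at most 6Lr and |γ'| ≤ 4L·|γ|. -/

import Mathlib

open Set

noncomputable section

variable {G : Type*} [Group G]

/-- Word length of `g` with respect to the (symmetrized) set `S`. -/
def wordLength (S : Set G) (g : G) : ℕ :=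
  sInf {n | ∃ l : List G, l.length = n ∧ (∀ x ∈ l, x ∈ S ∨ x⁻¹ ∈ S) ∧ l.prod = g}

/-- Word metric associated to `S`. -/
def wd (S : Set G) (g h : G) : ℕ := wordLength S (g⁻¹ * h)

/-- `S` generates `G`. -/
def Generates (S : Set G) : Prop :=
  ∀ g : G, ∃ l : List G, (∀ x ∈ l, x ∈ S ∨ x⁻¹ ∈ S) ∧ l.prod = g

/-- `S` generates the subset `P` (every element of `P` is a product of elements of
`S ∪ S⁻¹`). -/
def GeneratesSub (S : Set G) (P : Set G) : Prop :=
  ∀ g ∈ P, ∃ l : List G, (∀ x ∈ l, x ∈ S ∨ x⁻¹ ∈ S) ∧ l.prod = g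

/-- A bi-infinite geodesic in the graph with vertex set `V` and metric `d`. -/
def IsGeoLine (d : G → G → ℕ) (V : Set G) (γ : ℤ → G) : Prop :=
  (∀ t, γ t ∈ V) ∧ ∀ m n : ℤ, (d (γ m) (γ n) : ℤ) = |m - n|

/-- A discrete `(K,L)`-quasi-geodesic segment `c 0, …, c n` with vertices in `V`. -/
def IsQGSeg (d : G → G → ℕ) (V : Set G) (K L : ℝ) (n : ℕ) (c : ℕ → G) : Prop :=
  (∀ i ≤ n, c i ∈ V) ∧ ∀ i ≤ n, ∀ j ≤ n,
    (1 / K) * |(i : ℝ) - j| - L ≤ (d (c i) (c j) : ℝ) ∧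
      (d (c i) (c j) : ℝ) ≤ K * |(i : ℝ) - j| + L

/-- `γ` is `M`-Morse: every `(K,L)`-quasi-geodesic segment with endpoints on `γ` lies in the
`M K L`-neighborhood of `γ`. -/
def MorseWith (d : G → G → ℕ) (V : Set G) (M : ℝ → ℝ → ℝ) (γ : ℤ → G) : Prop :=
  ∀ K L : ℝ, 1 ≤ K → 0 < L → ∀ (n : ℕ) (c : ℕ → G), IsQGSeg d V K L n c →
    (∃ t, c 0 = γ t) → (∃ t, c n = γ t) →
    ∀ i ≤ n, ∃ t, (d (c i) (γ t) : ℝ) ≤ M K L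

/-- A combinatorial path: a nonempty list of vertices of `V` with consecutive vertices at
distance at most `1`. -/
def IsDPath (d : G → G → ℕ) (V : Set G) (l : List G) : Prop :=
  l ≠ [] ∧ (∀ x ∈ l, x ∈ V) ∧ l.Chain' (fun a b => d a b ≤ 1)

/-- `ρ_γ(r,t)`: infimal length of a path from `γ(t−r)` to `γ(t+r)` avoiding the open ball of
radius `r` about `γ t` (`∞` if none exists). -/
def rhoD (d : G → G → ℕ) (V : Set G) (γ : ℤ → G) (r : ℕ) (t : ℤ) : ℕ∞ :=
  sInf {n : ℕ∞ | ∃ l : List G, IsDPath d V l ∧ l.head? = some (γ (t - r)) ∧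
    l.getLast? = some (γ (t + r)) ∧ (∀ x ∈ l, r ≤ d (γ t) x) ∧ n = (l.length - 1 : ℕ)}

/-- The lower divergence of `γ`. -/
def ldivD (d : G → G → ℕ) (V : Set G) (γ : ℤ → G) (r : ℕ) : ℕ∞ :=
  ⨅ t : ℤ, rhoD d V γ r t

/-- Domination of functions: `f x ≤ A·g(Bx) + C·x` for `x > D`. -/
def DomN (f g : ℕ → ℕ∞) : Prop :=
  ∃ A B C D : ℕ, 0 < A ∧ 0 < B ∧ 0 < C ∧ 0 < D ∧
    ∀ x : ℕ, D < x → f x ≤ (A : ℕ∞) * g (B * x) + (C : ℕ∞) * (x : ℕ∞)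

/-- Equivalence of functions: mutual domination. -/
def EquivN (f g : ℕ → ℕ∞) : Prop := DomN f g ∧ DomN g f

/-- `f` is in the divergence spectrum of the graph `(V, d)`: some Morse bi-infinite geodesic
has lower divergence equivalent to `f`. -/
def InSpec (d : G → G → ℕ) (V : Set G) (f : ℕ → ℕ∞) : Prop :=
  ∃ γ : ℤ → G, IsGeoLine d V γ ∧ (∃ M, MorseWith d V M γ) ∧ EquivN (ldivD d V γ) f

/-- The collection of peripheral left cosets of the collection `𝓟` of subgroups. -/
def PeriCosets (𝓟 : Set (Subgroup G)) : Set (Set G) :=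
  {A | ∃ (g : G) (P : Subgroup G), P ∈ 𝓟 ∧ A = (g * ·) '' (P : Set G)}

/-- Adjacency in the coned-off Cayley graph: Cayley edges between group elements, and cone
edges between a group element and the cone point of a peripheral coset containing it. -/
inductive CAdj (S : Set G) (𝓟 : Set (Subgroup G)) :
    (G ⊕ ↥(PeriCosets 𝓟)) → (G ⊕ ↥(PeriCosets 𝓟)) → Prop
  | cayley (g h : G) : g ≠ h → (g⁻¹ * h ∈ S ∨ (g⁻¹ * h)⁻¹ ∈ S) →
      CAdj S 𝓟 (Sum.inl g) (Sum.inl h)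
  | cone (g : G) (A : ↥(PeriCosets 𝓟)) : g ∈ A.1 → CAdj S 𝓟 (Sum.inl g) (Sum.inr A)
  | cone' (g : G) (A : ↥(PeriCosets 𝓟)) : g ∈ A.1 → CAdj S 𝓟 (Sum.inr A) (Sum.inl g)

/-- The coned-off Cayley graph of `(G, S, 𝓟)`. -/
def conedGraph (S : Set G) (𝓟 : Set (Subgroup G)) : SimpleGraph (G ⊕ ↥(PeriCosets 𝓟)) where
  Adj := CAdj S 𝓟
  symm := by
    constructor
    intro u v h
    cases h with
    | cayley g h hne hs =>
        refine CAdj.cayley h g (Ne.symm hne) ?_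
        rcases hs with hs | hs
        · exact Or.inr (by simpa using hs)
        · exact Or.inl (by simpa using hs)
    | cone g A hg => exact CAdj.cone' g A hg
    | cone' g A hg => exact CAdj.cone g A hg
  loopless := by
    constructor
    intro u h
    cases h with
    | cayley g h hne _ => exact hne rfl

/-- A graph is (Gromov) hyperbolic: the four-point condition holds for its combinatorial
metric. -/
def GraphHyperbolic {V : Type*} (Γ : SimpleGraph V) : Prop :=
  ∃ δ : ℕ, ∀ x y z w : V,
    Γ.dist x y + Γ.dist z w ≤ max (Γ.dist x z + Γ.dist y w) (Γ.dist x w + Γ.dist y z) + δ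

/-- A graph is fine: there are only finitely many embedded paths of each given length between
any two vertices. -/
def GraphFine {V : Type*} (Γ : SimpleGraph V) : Prop :=
  ∀ (n : ℕ) (u v : V), {p : Γ.Walk u v | p.IsPath ∧ p.length = n}.Finite

/-- `(G, 𝓟)` is relatively hyperbolic (with respect to the finite generating set `S`): the
coned-off Cayley graph is connected, hyperbolic and fine. -/
def IsRelHyp (S : Set G) (𝓟 : Set (Subgroup G)) : Prop :=
  (conedGraph S 𝓟).Connected ∧ GraphHyperbolic (conedGraph S 𝓟) ∧
    GraphFine (conedGraph S 𝓟)

set_option linter.unusedSectionVars false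

namespace PNP

lemma wordLength_le {S : Set G} {g : G} {l : List G}
    (hl : ∀ x ∈ l, x ∈ S ∨ x⁻¹ ∈ S) (hp : l.prod = g) :
    wordLength S g ≤ l.length :=
  Nat.sInf_le ⟨l, rfl, hl, hp⟩

lemma wordLength_one (S : Set G) : wordLength S (1 : G) = 0 :=
  Nat.le_zero.mp (wordLength_le (l := []) (by simp) (by simp))

lemma wd_self (S : Set G) (g : G) : wd S g g = 0 := by
  simp [wd, wordLength_one]

lemma exists_min_word {S : Set G} {g : G}
    (h : ∃ l : List G, (∀ x ∈ l, x ∈ S ∨ x⁻¹ ∈ S) ∧ l.prod = g) :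
    ∃ l : List G, l.length = wordLength S g ∧ (∀ x ∈ l, x ∈ S ∨ x⁻¹ ∈ S) ∧ l.prod = g := by
  obtain ⟨l, h1, h2⟩ := h
  have hne : {n | ∃ l : List G, l.length = n ∧ (∀ x ∈ l, x ∈ S ∨ x⁻¹ ∈ S) ∧ l.prod = g}.Nonempty :=
    ⟨l.length, l, rfl, h1, h2⟩
  obtain ⟨l', hl', h1', h2'⟩ := Nat.sInf_mem hne
  exact ⟨l', hl', h1', h2'⟩

lemma wordLength_mul_le {S : Set G} {g h : G}
    (hg : ∃ l : List G, (∀ x ∈ l, x ∈ S ∨ x⁻¹ ∈ S) ∧ l.prod = g)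
    (hh : ∃ l : List G, (∀ x ∈ l, x ∈ S ∨ x⁻¹ ∈ S) ∧ l.prod = h) :
    wordLength S (g * h) ≤ wordLength S g + wordLength S h := by
  obtain ⟨l1, e1, m1, p1⟩ := exists_min_word hg
  obtain ⟨l2, e2, m2, p2⟩ := exists_min_word hh
  calc wordLength S (g * h) ≤ (l1 ++ l2).length := by
        refine wordLength_le ?_ (by simp [p1, p2])
        intro x hx
        rcases List.mem_append.mp hx with h | h
        exacts [m1 x h, m2 x h]
    _ = wordLength S g + wordLength S h := by simp [e1, e2]

lemma wd_triangle {S : Set G} (hgen : Generates S) (a b c : G) :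
    wd S a c ≤ wd S a b + wd S b c := by
  have h : a⁻¹ * c = (a⁻¹ * b) * (b⁻¹ * c) := by group
  rw [wd, h]
  exact wordLength_mul_le (hgen _) (hgen _)

lemma wordLength_inv_le {S : Set G} {g : G}
    (h : ∃ l : List G, (∀ x ∈ l, x ∈ S ∨ x⁻¹ ∈ S) ∧ l.prod = g) :
    wordLength S g⁻¹ ≤ wordLength S g := by
  obtain ⟨l, e, m, p⟩ := exists_min_word h
  calc wordLength S g⁻¹ ≤ ((l.map (fun x => x⁻¹)).reverse).length := by
        refine wordLength_le ?_ ?_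
        · intro x hx
          simp only [List.mem_reverse, List.mem_map] at hx
          obtain ⟨y, hy, rfl⟩ := hx
          rcases m y hy with h' | h'
          · exact Or.inr (by simpa)
          · exact Or.inl h'
        · rw [← p, ← List.prod_inv_reverse]
    _ = wordLength S g := by simp [e]

lemma wd_symm {S : Set G} (hgen : Generates S) (a b : G) :
    wd S a b = wd S b a := by
  have h1 : wordLength S (b⁻¹ * a) ≤ wordLength S (a⁻¹ * b) := by
    have := wordLength_inv_le (S := S) (g := a⁻¹ * b) (hgen _)
    simpa using this
  have h2 : wordLength S (a⁻¹ * b) ≤ wordLength S (b⁻¹ * a) := by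
    have := wordLength_inv_le (S := S) (g := b⁻¹ * a) (hgen _)
    simpa using this
  exact le_antisymm h2 h1

lemma wordLength_mono {S T : Set G} (hTS : T ⊆ S) {g : G}
    (h : ∃ l : List G, (∀ x ∈ l, x ∈ T ∨ x⁻¹ ∈ T) ∧ l.prod = g) :
    wordLength S g ≤ wordLength T g := by
  obtain ⟨l, e, m, p⟩ := exists_min_word h
  rw [← e]
  exact wordLength_le (fun x hx => (m x hx).imp (@hTS x) (@hTS x⁻¹)) p

lemma chain_wd_le {S : Set G} (hgen : Generates S) (γ : List G)
    (h : γ.Chain' (fun a b => wd S a b = 1)) :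
    ∀ d i : ℕ, i + d < γ.length → wd S (γ.getD i 1) (γ.getD (i + d) 1) ≤ d := by
  intro d
  induction d with
  | zero => intro i hi; simp [wd_self]
  | succ d ih =>
    intro i hi
    have h1 : wd S (γ.getD i 1) (γ.getD (i + 1) 1) = 1 := by
      have hc := List.isChain_iff_getElem.mp h i (by omega)
      rwa [List.getD_eq_getElem γ 1 (by omega : i < γ.length),
        List.getD_eq_getElem γ 1 (by omega : i + 1 < γ.length)]
    have h2 := ih (i + 1) (by omega)
    calc wd S (γ.getD i 1) (γ.getD (i + (d + 1)) 1)
        ≤ wd S (γ.getD i 1) (γ.getD (i + 1) 1) + wd S (γ.getD (i + 1) 1) (γ.getD (i + (d + 1)) 1) :=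
          wd_triangle hgen _ _ _
      _ ≤ 1 + d := by
          have : i + (d + 1) = (i + 1) + d := by omega
          rw [this, h1]
          exact Nat.add_le_add_left h2 1
      _ = d + 1 := by omega

def pathFrom (u : G) : List G → List G
  | [] => [u]
  | a :: t => u :: pathFrom (u * a) t

lemma pathFrom_ne_nil (u : G) (w : List G) : pathFrom u w ≠ [] := by
  cases w <;> simp [pathFrom]

lemma pathFrom_head (u : G) (w : List G) : (pathFrom u w).head? = some u := by
  cases w <;> simp [pathFrom]

lemma pathFrom_length (u : G) (w : List G) : (pathFrom u w).length = w.length + 1 := by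
  induction w generalizing u with
  | nil => simp [pathFrom]
  | cons a t ih => simp [pathFrom, ih]

lemma pathFrom_getLast (u : G) (w : List G) :
    (pathFrom u w).getLast? = some (u * w.prod) := by
  induction w generalizing u with
  | nil => simp [pathFrom]
  | cons a t ih =>
    show (u :: pathFrom (u * a) t).getLast? = _
    rw [List.getLast?_cons, ih]
    simp [mul_assoc]

lemma pathFrom_last_mem (u : G) (w : List G) : u * w.prod ∈ pathFrom u w := by
  induction w generalizing u with
  | nil => simp [pathFrom]
  | cons a t ih =>
    simp only [pathFrom, List.prod_cons, List.mem_cons]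
    right
    rw [← mul_assoc]
    exact ih (u * a)

lemma pathFrom_mem_subgroup {P : Subgroup G} {u : G} {w : List G}
    (hu : u ∈ P) (hw : ∀ a ∈ w, a ∈ P) : ∀ x ∈ pathFrom u w, x ∈ P := by
  induction w generalizing u with
  | nil => intro x hx; simp [pathFrom] at hx; subst hx; exact hu
  | cons a t ih =>
    intro x hx
    simp only [pathFrom, List.mem_cons] at hx
    rcases hx with rfl | hx
    · exact hu
    · exact ih (mul_mem hu (hw a (by simp))) (fun b hb => hw b (by simp [hb])) x hx

lemma pathFrom_chain {T : Set G} (u : G) (w : List G) (hw : ∀ a ∈ w, a ∈ T ∨ a⁻¹ ∈ T) :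
    (pathFrom u w).Chain' (fun a b => wd T a b ≤ 1) := by
  induction w generalizing u with
  | nil => exact List.isChain_singleton _
  | cons a t ih =>
    show List.Chain' _ (u :: pathFrom (u * a) t)
    unfold List.Chain'
    rw [List.isChain_cons]
    constructor
    · intro y hy
      rw [pathFrom_head] at hy
      cases hy
      have : wd T u (u * a) = wordLength T a := by simp [wd]
      rw [this]
      calc wordLength T a ≤ [a].length := wordLength_le (by simpa using hw a (by simp)) (by simp)
        _ = 1 := rfl
    · exact ih (u * a) (fun b hb => hw b (by simp [hb]))

lemma pathFrom_mem_append_left (u : G) (w w' : List G) :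
    ∀ x ∈ pathFrom u w, x ∈ pathFrom u (w ++ w') := by
  induction w generalizing u with
  | nil =>
    intro x hx
    simp [pathFrom] at hx
    subst hx
    cases w' <;> simp [pathFrom]
  | cons a t ih =>
    intro x hx
    simp only [pathFrom, List.cons_append, List.mem_cons] at hx ⊢
    rcases hx with rfl | hx
    · exact Or.inl rfl
    · exact Or.inr (ih (u * a) x hx)

lemma pathFrom_mem_append (u : G) (w w' : List G) {x : G}
    (hx : x ∈ pathFrom u (w ++ w')) :
    x ∈ pathFrom u w ∨ x ∈ pathFrom (u * w.prod) w' := by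
  induction w generalizing u with
  | nil => right; simpa using hx
  | cons a t ih =>
    simp only [pathFrom, List.cons_append, List.mem_cons] at hx ⊢
    rcases hx with rfl | hx
    · exact Or.inl (Or.inl rfl)
    · rcases ih (u * a) hx with h | h
      · exact Or.inl (Or.inr h)
      · right
        rwa [List.prod_cons, ← mul_assoc]

lemma pathFrom_mem_prefix (u : G) (w : List G) :
    ∀ x ∈ pathFrom u w, ∃ p : List G, p <+: w ∧ x = u * p.prod := by
  induction w generalizing u with
  | nil =>
    intro x hx
    simp [pathFrom] at hx
    exact ⟨[], by simp, by simp [hx]⟩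
  | cons a t ih =>
    intro x hx
    simp only [pathFrom, List.mem_cons] at hx
    rcases hx with rfl | hx
    · exact ⟨[], by simp, by simp⟩
    · obtain ⟨p, hp, rfl⟩ := ih (u * a) x hx
      exact ⟨a :: p, by simpa using hp, by simp [mul_assoc]⟩

lemma pathFrom_mem_wd {S : Set G} {w : List G} (hw : ∀ a ∈ w, a ∈ S ∨ a⁻¹ ∈ S) (u : G) :
    ∀ x ∈ pathFrom u w, wd S u x ≤ w.length := by
  intro x hx
  obtain ⟨p, hp, rfl⟩ := pathFrom_mem_prefix u w x hx
  have : wd S u (u * p.prod) = wordLength S p.prod := by simp [wd]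
  rw [this]
  calc wordLength S p.prod ≤ p.length :=
        wordLength_le (fun a ha => hw a (hp.subset ha)) rfl
    _ ≤ w.length := hp.length_le

def bigWord (w : ℕ → List G) : ℕ → List G
  | 0 => []
  | j + 1 => bigWord w j ++ w j

lemma bigWord_length (w : ℕ → List G) (n : ℕ) :
    (bigWord w n).length = ∑ j ∈ Finset.range n, (w j).length := by
  induction n with
  | zero => simp [bigWord]
  | succ n ih => simp [bigWord, ih, Finset.sum_range_succ]

lemma bigWord_mem (w : ℕ → List G) (n : ℕ) {a : G} (ha : a ∈ bigWord w n) :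
    ∃ j < n, a ∈ w j := by
  induction n with
  | zero => simp [bigWord] at ha
  | succ n ih =>
    simp only [bigWord, List.mem_append] at ha
    rcases ha with h | h
    · obtain ⟨j, hj, hj'⟩ := ih h
      exact ⟨j, by omega, hj'⟩
    · exact ⟨n, by omega, h⟩

lemma bigWord_append (w : ℕ → List G) (a : ℕ) :
    ∀ d : ℕ, ∃ rest : List G, bigWord w (a + d) = bigWord w a ++ rest := by
  intro d
  induction d with
  | zero => exact ⟨[], by simp⟩
  | succ d ih =>
    obtain ⟨rest, hrest⟩ := ih
    refine ⟨rest ++ w (a + d), ?_⟩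
    show bigWord w (a + d) ++ w (a + d) = _
    rw [hrest, List.append_assoc]

end PNP

set_option maxHeartbeats 1000000 in
/-- Pushing a path in the Cayley graph of `G` that stays in the `r`-neighborhood of a
peripheral subgroup `P` to a path in the Cayley graph of `P`, with controlled Hausdorff
distance and length. -/
theorem path_near_peripheral_pushed_into_peripheral
    {G : Type*} [Group G] (S : Finset G) (𝓟 : Finset (Subgroup G))
    (hgen : Generates (↑S : Set G))
    (hrh : IsRelHyp (↑S : Set G) (↑𝓟 : Set (Subgroup G)))
    (P : Subgroup G) (hP : P ∈ 𝓟) (T : Set G) (hT : T = (↑S : Set G) ∩ (P : Set G))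
    (hTgen : GeneratesSub T (P : Set G))
    (L : ℝ) (hL : 1 ≤ L)
    (hcomp : ∀ u v : G, u ∈ P → v ∈ P → (wd T u v : ℝ) ≤ L * (wd (↑S : Set G) u v) + L)
    (r : ℝ) (hr : L < r)
    (γ : List G) (hpath : γ.Chain' (fun a b => wd (↑S : Set G) a b = 1)) (hne : γ ≠ [])
    (hsimple : γ.Nodup)
    (hnbhd : ∀ x ∈ γ, ∃ p ∈ (P : Set G), (wd (↑S : Set G) x p : ℝ) < r)
    (hhead : ∃ x, γ.head? = some x ∧ x ∈ P) (hlast : ∃ x, γ.getLast? = some x ∧ x ∈ P)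
    (hlen : r < (γ.length : ℝ) - 1) :
    ∃ γ' : List G, γ' ≠ [] ∧ (∀ x ∈ γ', x ∈ P) ∧
      γ'.Chain' (fun a b => wd T a b ≤ 1) ∧
      γ'.head? = γ.head? ∧ γ'.getLast? = γ.getLast? ∧
      (∀ x ∈ γ, ∃ y ∈ γ', (wd (↑S : Set G) x y : ℝ) ≤ 6 * L * r) ∧
      (∀ y ∈ γ', ∃ x ∈ γ, (wd (↑S : Set G) x y : ℝ) ≤ 6 * L * r) ∧
      ((γ'.length : ℝ) - 1) ≤ 4 * L * ((γ.length : ℝ) - 1) := by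
  classical
  clear hrh hsimple hP
  have hTsubS : T ⊆ (↑S : Set G) := by rw [hT]; exact inter_subset_left
  have hTsubP : T ⊆ (P : Set G) := by rw [hT]; exact inter_subset_right
  have hL0 : (0:ℝ) < L := lt_of_lt_of_le one_pos hL
  have hr1 : (1:ℝ) < r := lt_of_le_of_lt hL hr
  have hr0 : (0:ℝ) < r := lt_trans one_pos hr1
  have hγpos : 0 < γ.length := List.length_pos_iff.mpr hne
  set n : ℕ := γ.length - 1 with hn
  have hlen' : γ.length = n + 1 := by omega
  have hcast : (γ.length : ℝ) - 1 = (n : ℝ) := by rw [hlen']; push_cast; ring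
  rw [hcast] at hlen
  have hrn : r < (n : ℝ) := hlen
  have hn1 : 1 ≤ n := by
    have h1 : (1:ℝ) < (n:ℝ) := lt_trans hr1 hrn
    exact_mod_cast h1.le
  set m : ℕ := ⌈r⌉₊ with hm
  have hm0 : 0 < m := Nat.ceil_pos.mpr hr0
  have hrm : r ≤ (m : ℝ) := Nat.le_ceil r
  have hmr : ((m : ℝ)) ≤ r + 1 := (Nat.ceil_lt_add_one hr0.le).le
  set x : ℕ → G := fun i => γ.getD i 1 with hx
  have hxval : ∀ i, i < γ.length → x i = γ.getD i 1 := fun i _ => rfl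
  have hxmem : ∀ i, i ≤ n → x i ∈ γ := by
    intro i hi
    have hi' : i < γ.length := by omega
    show γ.getD i 1 ∈ γ
    rw [List.getD_eq_getElem γ 1 hi']
    exact List.getElem_mem hi'
  obtain ⟨z0, hz0, hz0P⟩ := hhead
  obtain ⟨zn, hzn, hznP⟩ := hlast
  have hx0 : γ.head? = some (x 0) := by
    rw [List.head?_eq_getElem?, List.getElem?_eq_getElem hγpos]
    show _ = some (γ.getD 0 1)
    rw [List.getD_eq_getElem γ 1 hγpos]
  have hxn : γ.getLast? = some (x n) := by
    rw [List.getLast?_eq_getElem?, List.getElem?_eq_getElem (by omega : γ.length - 1 < γ.length)]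
    show _ = some (γ.getD n 1)
    rw [List.getD_eq_getElem γ 1 (by omega : n < γ.length)]
  have hx0P : x 0 ∈ P := by
    have := (hx0.symm.trans hz0)
    rw [Option.some.injEq] at this
    rwa [this]
  have hxnP : x n ∈ P := by
    have := (hxn.symm.trans hzn)
    rw [Option.some.injEq] at this
    rwa [this]
  set k : ℕ → ℕ := fun j => min (j * m) n with hk
  have hkval : ∀ j, k j = min (j * m) n := fun j => rfl
  have hkmono : ∀ j, k j ≤ k (j + 1) := by
    intro j
    rw [hkval, hkval]
    have : j * m ≤ (j+1) * m := Nat.mul_le_mul_right m (by omega)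
    omega
  have hkn : ∀ j, k j ≤ n := fun j => min_le_right _ _
  have hkdiff : ∀ j, k (j+1) - k j ≤ m := by
    intro j
    rw [hkval, hkval]
    have : (j+1) * m = j * m + m := by ring
    omega
  have hknn : k n = n := by
    rw [hkval]
    have : n ≤ n * m := by
      calc n = n * 1 := (mul_one n).symm
        _ ≤ n * m := Nat.mul_le_mul_left n hm0
    omega
  have hk0 : k 0 = 0 := by rw [hkval]; simp
  have hchoice : ∀ j, ∃ q, q ∈ (P : Set G) ∧ (wd (↑S : Set G) (x (k j)) q : ℝ) < r := by
    intro j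
    obtain ⟨q, hq1, hq2⟩ := hnbhd (x (k j)) (hxmem _ (hkn j))
    exact ⟨q, hq1, hq2⟩
  set p : ℕ → G := fun j =>
    if n ≤ j * m then x n else if j = 0 then x 0 else Classical.choose (hchoice j) with hp
  have hpval : ∀ j, p j =
      (if n ≤ j * m then x n else if j = 0 then x 0 else Classical.choose (hchoice j)) :=
    fun j => rfl
  have hpP : ∀ j, p j ∈ P := by
    intro j
    rw [hpval]
    split
    · exact hxnP
    · split
      · exact hx0P
      · exact (Classical.choose_spec (hchoice j)).1
  have hpn : ∀ j, n ≤ j * m → p j = x n := by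
    intro j h; rw [hpval, if_pos h]
  have hp0 : p 0 = x 0 := by
    rw [hpval, if_neg (by simpa using (by omega : ¬ n ≤ 0)), if_pos rfl]
  have hpnear : ∀ j, (wd (↑S : Set G) (x (k j)) (p j) : ℝ) < r := by
    intro j
    rw [hpval]
    split
    · next h =>
      have hkj : k j = n := by rw [hkval]; omega
      rw [hkj, PNP.wd_self]
      simpa using hr0
    · split
      · next h h0 =>
        subst h0
        rw [hk0, PNP.wd_self]
        simpa using hr0
      · exact (Classical.choose_spec (hchoice j)).2
  have hAzero : ∀ j, (j = 0 ∨ n ≤ j * m) → wd (↑S : Set G) (x (k j)) (p j) = 0 := by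
    intro j hj
    rcases hj with rfl | hj
    · rw [hp0, hk0, PNP.wd_self]
    · have hkj : k j = n := by rw [hkval]; omega
      rw [hpn j hj, hkj, PNP.wd_self]
  have hwex : ∀ j, ∃ l : List G, l.length = wd T (p j) (p (j+1)) ∧
      (∀ a ∈ l, a ∈ T ∨ a⁻¹ ∈ T) ∧ l.prod = (p j)⁻¹ * p (j+1) := by
    intro j
    exact PNP.exists_min_word (hTgen _ (mul_mem (inv_mem (hpP j)) (hpP (j+1))))
  choose w hwlen hwT hwprod using hwex
  have hbwprod : ∀ j, (PNP.bigWord w j).prod = (x 0)⁻¹ * p j := by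
    intro j
    induction j with
    | zero => rw [hp0]; simp [PNP.bigWord]
    | succ j ih =>
      show (PNP.bigWord w j ++ w j).prod = _
      rw [List.prod_append, ih, hwprod]
      group
  set γ' : List G := PNP.pathFrom (x 0) (PNP.bigWord w n) with hγ'
  have hbwT : ∀ a ∈ PNP.bigWord w n, a ∈ T ∨ a⁻¹ ∈ T := by
    intro a ha
    obtain ⟨j, _, hj⟩ := PNP.bigWord_mem w n ha
    exact hwT j a hj
  have hbwP : ∀ a ∈ PNP.bigWord w n, a ∈ P := by
    intro a ha
    rcases hbwT a ha with h | h
    · exact hTsubP h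
    · exact (inv_mem_iff).mp (hTsubP h)
  have hpmem : ∀ jj, jj ≤ n → p jj ∈ γ' := by
    intro jj hjj
    obtain ⟨rest, hrest⟩ := PNP.bigWord_append w jj (n - jj)
    rw [(by omega : jj + (n - jj) = n)] at hrest
    have h1 : p jj ∈ PNP.pathFrom (x 0) (PNP.bigWord w jj) := by
      have h2 := PNP.pathFrom_last_mem (x 0) (PNP.bigWord w jj)
      rwa [hbwprod jj, mul_inv_cancel_left] at h2
    rw [hγ', hrest]
    exact PNP.pathFrom_mem_append_left _ _ _ _ h1
  -- the term bound
  have hterm : ∀ j, ((w j).length : ℝ) ≤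
      L * ((wd (↑S : Set G) (x (k j)) (p j) : ℝ) + (((k (j+1)) : ℝ) - (k j))
        + (wd (↑S : Set G) (x (k (j+1))) (p (j+1)) : ℝ))
      + (if j * m < n then L else 0) := by
    intro j
    by_cases hcase : n ≤ j * m
    · have hj1 : n ≤ (j+1) * m := le_trans hcase (Nat.mul_le_mul_right m (by omega))
      have e3 : (w j).length = 0 := by
        rw [hwlen j, hpn j hcase, hpn (j+1) hj1, PNP.wd_self]
      have a1 := hAzero j (Or.inr hcase)
      have a2 := hAzero (j+1) (Or.inr hj1)
      have e4 : k j = n := by rw [hkval]; omega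
      have e5 : k (j+1) = n := by rw [hkval]; omega
      rw [e3, a1, a2, e4, e5, if_neg (by omega)]
      norm_num
    · push_neg at hcase
      rw [if_pos hcase, hwlen j]
      have h1 : (wd T (p j) (p (j+1)) : ℝ) ≤ L * (wd (↑S : Set G) (p j) (p (j+1)) : ℝ) + L :=
        hcomp _ _ (hpP j) (hpP (j+1))
      have h2 : wd (↑S : Set G) (p j) (p (j+1)) ≤
          wd (↑S : Set G) (p j) (x (k j)) + wd (↑S : Set G) (x (k j)) (p (j+1)) :=
        PNP.wd_triangle hgen _ _ _
      have h3 : wd (↑S : Set G) (x (k j)) (p (j+1)) ≤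
          wd (↑S : Set G) (x (k j)) (x (k (j+1))) + wd (↑S : Set G) (x (k (j+1))) (p (j+1)) :=
        PNP.wd_triangle hgen _ _ _
      have h4 : wd (↑S : Set G) (p j) (x (k j)) = wd (↑S : Set G) (x (k j)) (p j) :=
        PNP.wd_symm hgen _ _
      have h5 : wd (↑S : Set G) (x (k j)) (x (k (j+1))) ≤ k (j+1) - k j := by
        have hc := PNP.chain_wd_le hgen γ hpath (k (j+1) - k j) (k j)
          (by have := hkn (j+1); have := hkmono j; omega)
        rwa [(by have := hkmono j; omega : k j + (k (j+1) - k j) = k (j+1))] at hc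
      have c5 : (wd (↑S : Set G) (x (k j)) (x (k (j+1))) : ℝ) ≤ ((k (j+1)) : ℝ) - (k j) := by
        have h6 := hkmono j
        have hcast2 : ((k (j+1) - k j : ℕ) : ℝ) = ((k (j+1)) : ℝ) - (k j) := by
          rw [Nat.cast_sub h6]
        calc (wd (↑S : Set G) (x (k j)) (x (k (j+1))) : ℝ) ≤ ((k (j+1) - k j : ℕ) : ℝ) := by
              exact_mod_cast h5
          _ = _ := hcast2
      have hnat : wd (↑S : Set G) (p j) (p (j+1)) ≤
          wd (↑S : Set G) (x (k j)) (p j) +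
            (wd (↑S : Set G) (x (k j)) (x (k (j+1))) + wd (↑S : Set G) (x (k (j+1))) (p (j+1))) := by
        calc wd (↑S : Set G) (p j) (p (j+1)) ≤ _ := h2
          _ ≤ _ := by rw [h4]; exact Nat.add_le_add_left h3 _
      have hreal : (wd (↑S : Set G) (p j) (p (j+1)) : ℝ) ≤
          (wd (↑S : Set G) (x (k j)) (p j) : ℝ) + (((k (j+1)) : ℝ) - (k j))
            + (wd (↑S : Set G) (x (k (j+1))) (p (j+1)) : ℝ) := by
        have := (Nat.cast_le (α := ℝ)).mpr hnat
        push_cast at this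
        linarith [c5]
      have hmul := mul_le_mul_of_nonneg_left hreal hL0.le
      linarith
  refine ⟨γ', PNP.pathFrom_ne_nil _ _, ?_, ?_, ?_, ?_, ?_, ?_, ?_⟩
  · intro y hy
    exact PNP.pathFrom_mem_subgroup hx0P hbwP y hy
  · exact PNP.pathFrom_chain _ _ hbwT
  · rw [hγ', PNP.pathFrom_head, hx0]
  · rw [hγ', PNP.pathFrom_getLast, hbwprod n, mul_inv_cancel_left, hxn,
      hpn n (by calc n = n * 1 := (mul_one n).symm
        _ ≤ n * m := Nat.mul_le_mul_left n hm0)]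
  · -- Hausdorff direction 1
    intro z hz
    obtain ⟨i, hilt, hgi⟩ := List.mem_iff_getElem.mp hz
    have hi : i ≤ n := by omega
    have hzx : z = x i := by
      show z = γ.getD i 1
      rw [List.getD_eq_getElem γ 1 hilt, hgi]
    subst hzx
    set j : ℕ := i / m with hj
    have hjm : j * m ≤ i := Nat.div_mul_le_self i m
    have hjn : j ≤ n := le_trans (Nat.div_le_self i m) hi
    have hkj : k j = j * m := by rw [hkval]; omega
    refine ⟨p j, hpmem j hjn, ?_⟩
    have hd1 : wd (↑S : Set G) (x (j*m)) (x i) ≤ i - j*m := by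
      have hc := PNP.chain_wd_le hgen γ hpath (i - j*m) (j*m) (by omega)
      rwa [(by omega : j*m + (i - j*m) = i)] at hc
    have hdm : i - j*m ≤ m - 1 := by
      have hdm1 := Nat.div_add_mod i m
      have hdm2 := Nat.mod_lt i hm0
      have hbr : j * m = m * (i / m) := by rw [hj, Nat.mul_comm]
      omega
    have tri : wd (↑S : Set G) (x i) (p j) ≤
        wd (↑S : Set G) (x i) (x (j*m)) + wd (↑S : Set G) (x (j*m)) (p j) :=
      PNP.wd_triangle hgen _ _ _
    have hsym : wd (↑S : Set G) (x i) (x (j*m)) = wd (↑S : Set G) (x (j*m)) (x i) :=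
      PNP.wd_symm hgen _ _
    have hnear := hpnear j
    rw [hkj] at hnear
    have hnat : wd (↑S : Set G) (x i) (p j) ≤ (i - j*m) + wd (↑S : Set G) (x (j*m)) (p j) := by
      calc wd (↑S : Set G) (x i) (p j) ≤ _ := tri
        _ ≤ _ := by rw [hsym]; exact Nat.add_le_add_right hd1 _
    have hreal : (wd (↑S : Set G) (x i) (p j) : ℝ) ≤
        ((i - j*m : ℕ) : ℝ) + (wd (↑S : Set G) (x (j*m)) (p j) : ℝ) := by
      exact_mod_cast hnat
    have hc1 : ((i - j*m : ℕ) : ℝ) ≤ r := by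
      have h1 : ((i - j*m : ℕ) : ℝ) ≤ ((m - 1 : ℕ) : ℝ) := by exact_mod_cast hdm
      have h2 : ((m - 1 : ℕ) : ℝ) = (m : ℝ) - 1 := by
        rw [Nat.cast_sub hm0]; norm_num
      rw [h2] at h1
      linarith
    calc (wd (↑S : Set G) (x i) (p j) : ℝ) ≤ r + r := by linarith
      _ ≤ 6 * L * r := by nlinarith
  · -- Hausdorff direction 2
    intro y hy
    have hsplit : ∀ jj, ∀ y : G, y ∈ PNP.pathFrom (x 0) (PNP.bigWord w jj) →
        y = x 0 ∨ ∃ j < jj, y ∈ PNP.pathFrom (p j) (w j) := by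
      intro jj
      induction jj with
      | zero =>
        intro y hy
        left
        simpa [PNP.bigWord, PNP.pathFrom] using hy
      | succ jj ih =>
        intro y hy
        rcases PNP.pathFrom_mem_append (x 0) (PNP.bigWord w jj) (w jj) hy with h | h
        · rcases ih y h with h' | ⟨j, hjlt, hj'⟩
          · exact Or.inl h'
          · exact Or.inr ⟨j, by omega, hj'⟩
        · right
          refine ⟨jj, by omega, ?_⟩
          rwa [hbwprod jj, mul_inv_cancel_left] at h
    rcases hsplit n y hy with rfl | ⟨j, hjn, hj⟩
    · refine ⟨x 0, hxmem 0 (by omega), ?_⟩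
      simp only [PNP.wd_self, Nat.cast_zero]
      positivity
    · refine ⟨x (k j), hxmem _ (hkn j), ?_⟩
      have h1 : wd (↑S : Set G) (p j) y ≤ (w j).length :=
        PNP.pathFrom_mem_wd (S := (↑S : Set G))
          (fun a ha => (hwT j a ha).imp (fun h => hTsubS h) (fun h => hTsubS h)) (p j) y hj
      have h2 := hterm j
      have h3 : (wd (↑S : Set G) (x (k j)) y : ℝ) ≤
          (wd (↑S : Set G) (x (k j)) (p j) : ℝ) + ((w j).length : ℝ) := by
        have htr := PNP.wd_triangle hgen (x (k j)) (p j) y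
        have : wd (↑S : Set G) (x (k j)) y ≤ wd (↑S : Set G) (x (k j)) (p j) + (w j).length :=
          le_trans htr (Nat.add_le_add_left h1 _)
        exact_mod_cast this
      have hnear1 := hpnear j
      have hnear2 := hpnear (j+1)
      have hmid : ((k (j+1)) : ℝ) - (k j) ≤ (m : ℝ) := by
        have := hkdiff j
        have h6 := hkmono j
        have : ((k (j+1) - k j : ℕ) : ℝ) ≤ (m : ℝ) := by exact_mod_cast this
        rw [Nat.cast_sub h6] at this
        linarith
    -- combine: wd ≤ r + (L*(r + (r+1) + r) + L) ≤ 6Lr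
      have hE : (if j * m < n then L else 0 : ℝ) ≤ L := by
        split <;> linarith
      have hwb : ((w j).length : ℝ) ≤ L * (r + (r + 1) + r) + L := by
        calc ((w j).length : ℝ) ≤ _ := h2
          _ ≤ L * (r + (r + 1) + r) + L := by
            have hb : (wd (↑S : Set G) (x (k j)) (p j) : ℝ) + (((k (j+1)) : ℝ) - (k j))
                + (wd (↑S : Set G) (x (k (j+1))) (p (j+1)) : ℝ) ≤ r + (r + 1) + r := by
              have : ((k (j+1)) : ℝ) - (k j) ≤ r + 1 := by linarith
              linarith
            have := mul_le_mul_of_nonneg_left hb hL0.le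
            linarith
      calc (wd (↑S : Set G) (x (k j)) y : ℝ) ≤ r + (L * (r + (r + 1) + r) + L) := by linarith
        _ ≤ 6 * L * r := by nlinarith
  · -- length bound
    have hlenγ' : (γ'.length : ℝ) - 1 = ((PNP.bigWord w n).length : ℝ) := by
      rw [hγ', PNP.pathFrom_length]
      push_cast
      ring
    rw [hlenγ', hcast, PNP.bigWord_length]
    push_cast
    set c : ℕ := (n - 1) / m with hc
    have hAbound : ∀ j, (wd (↑S : Set G) (x (k j)) (p j) : ℝ) ≤
        if j ∈ Finset.Icc 1 c then r else 0 := by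
      intro j
      split
      · exact (hpnear j).le
      · next hnot =>
        simp only [Finset.mem_Icc, not_and_or, not_le] at hnot
        rcases hnot with h1 | h2
        · rw [hAzero j (Or.inl (by omega))]
          norm_num
        · have hge : n ≤ j * m := by
            by_contra hcon
            push_neg at hcon
            have hjc : j ≤ c := by
              rw [hc]
              exact (Nat.le_div_iff_mul_le hm0).mpr (by omega)
            omega
          rw [hAzero j (Or.inr hge)]
          norm_num
    have hSA : ∑ j ∈ Finset.range (n+1), (wd (↑S : Set G) (x (k j)) (p j) : ℝ) ≤ (c:ℝ) * r := by
      calc ∑ j ∈ Finset.range (n+1), (wd (↑S : Set G) (x (k j)) (p j) : ℝ)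
          ≤ ∑ j ∈ Finset.range (n+1), (if j ∈ Finset.Icc 1 c then r else 0) :=
            Finset.sum_le_sum (fun j _ => hAbound j)
        _ = ∑ j ∈ Finset.range (n+1) ∩ Finset.Icc 1 c, r := Finset.sum_ite_mem _ _ _
        _ = ((Finset.range (n+1) ∩ Finset.Icc 1 c).card : ℝ) * r := by
            rw [Finset.sum_const, nsmul_eq_mul]
        _ ≤ (c:ℝ) * r := by
            have hcard : (Finset.range (n+1) ∩ Finset.Icc 1 c).card ≤ c :=
              le_trans (Finset.card_le_card Finset.inter_subset_right) (by simp)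
            have h' : ((Finset.range (n+1) ∩ Finset.Icc 1 c).card : ℝ) ≤ (c:ℝ) := by
              exact_mod_cast hcard
            nlinarith
    have hS1 : ∑ j ∈ Finset.range n, (wd (↑S : Set G) (x (k j)) (p j) : ℝ) ≤ (c:ℝ) * r := by
      refine le_trans ?_ hSA
      refine Finset.sum_le_sum_of_subset_of_nonneg ?_ ?_
      · intro a ha
        simp only [Finset.mem_range] at ha ⊢
        omega
      · intro a _ _
        positivity
    have hS3 : ∑ j ∈ Finset.range n, (wd (↑S : Set G) (x (k (j+1))) (p (j+1)) : ℝ) ≤ (c:ℝ) * r := by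
      have hsucc := Finset.sum_range_succ' (fun j => (wd (↑S : Set G) (x (k j)) (p j) : ℝ)) n
      have hnn : (0:ℝ) ≤ (wd (↑S : Set G) (x (k 0)) (p 0) : ℝ) := by positivity
      calc ∑ j ∈ Finset.range n, (wd (↑S : Set G) (x (k (j+1))) (p (j+1)) : ℝ)
          ≤ ∑ j ∈ Finset.range (n+1), (wd (↑S : Set G) (x (k j)) (p j) : ℝ) := by
            rw [hsucc]; linarith
        _ ≤ (c:ℝ) * r := hSA
    have hS2 : ∑ j ∈ Finset.range n, (((k (j+1)) : ℝ) - (k j)) = (n : ℝ) := by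
      rw [Finset.sum_range_sub (fun j => ((k j : ℕ) : ℝ))]
      rw [hknn, hk0]
      norm_num
    have hS4 : ∑ j ∈ Finset.range n, (if j * m < n then L else 0 : ℝ) ≤ ((c:ℝ) + 1) * L := by
      have heq : ∀ j, (if j * m < n then L else 0 : ℝ) = if j ∈ Finset.range (c+1) then L else 0 := by
        intro j
        have hiff : j * m < n ↔ j ∈ Finset.range (c+1) := by
          simp only [Finset.mem_range]
          constructor
          · intro h
            have : j ≤ c := by
              rw [hc]; exact (Nat.le_div_iff_mul_le hm0).mpr (by omega)
            omega
          · intro h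
            have hjc : j ≤ c := by omega
            have := (Nat.le_div_iff_mul_le hm0).mp (hc ▸ hjc)
            omega
        simp only [hiff]
      calc ∑ j ∈ Finset.range n, (if j * m < n then L else 0 : ℝ)
          = ∑ j ∈ Finset.range n, (if j ∈ Finset.range (c+1) then L else 0 : ℝ) :=
            Finset.sum_congr rfl (fun j _ => heq j)
        _ = ∑ j ∈ Finset.range n ∩ Finset.range (c+1), L := Finset.sum_ite_mem _ _ _
        _ = ((Finset.range n ∩ Finset.range (c+1)).card : ℝ) * L := by
            rw [Finset.sum_const, nsmul_eq_mul]
        _ ≤ ((c:ℝ) + 1) * L := by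
            have hcard : (Finset.range n ∩ Finset.range (c+1)).card ≤ c + 1 :=
              le_trans (Finset.card_le_card Finset.inter_subset_right) (by simp)
            have h' : ((Finset.range n ∩ Finset.range (c+1)).card : ℝ) ≤ (c:ℝ) + 1 := by
              exact_mod_cast hcard
            nlinarith
    have hexpand : ∑ j ∈ Finset.range n, ((w j).length : ℝ) ≤
        L * (((c:ℝ) * r) + (n:ℝ) + ((c:ℝ) * r)) + (((c:ℝ) + 1) * L) := by
      have step1 : ∑ j ∈ Finset.range n, ((w j).length : ℝ) ≤
          ∑ j ∈ Finset.range n,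
            (L * ((wd (↑S : Set G) (x (k j)) (p j) : ℝ) + (((k (j+1)) : ℝ) - (k j))
              + (wd (↑S : Set G) (x (k (j+1))) (p (j+1)) : ℝ))
            + (if j * m < n then L else 0)) :=
        Finset.sum_le_sum (fun j _ => hterm j)
      have step2 : ∑ j ∈ Finset.range n,
            (L * ((wd (↑S : Set G) (x (k j)) (p j) : ℝ) + (((k (j+1)) : ℝ) - (k j))
              + (wd (↑S : Set G) (x (k (j+1))) (p (j+1)) : ℝ))
            + (if j * m < n then L else 0)) =
          L * ((∑ j ∈ Finset.range n, (wd (↑S : Set G) (x (k j)) (p j) : ℝ))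
            + (∑ j ∈ Finset.range n, (((k (j+1)) : ℝ) - (k j)))
            + (∑ j ∈ Finset.range n, (wd (↑S : Set G) (x (k (j+1))) (p (j+1)) : ℝ)))
          + ∑ j ∈ Finset.range n, (if j * m < n then L else 0 : ℝ) := by
        rw [Finset.sum_add_distrib, ← Finset.mul_sum, Finset.sum_add_distrib,
          Finset.sum_add_distrib]
      rw [step2] at step1
      have hmono : L * ((∑ j ∈ Finset.range n, (wd (↑S : Set G) (x (k j)) (p j) : ℝ))
            + (∑ j ∈ Finset.range n, (((k (j+1)) : ℝ) - (k j)))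
            + (∑ j ∈ Finset.range n, (wd (↑S : Set G) (x (k (j+1))) (p (j+1)) : ℝ)))
          ≤ L * (((c:ℝ) * r) + (n:ℝ) + ((c:ℝ) * r)) := by
        refine mul_le_mul_of_nonneg_left ?_ hL0.le
        rw [hS2]
        linarith
      linarith
    -- final numerics
    have hcm : (c:ℝ) * r ≤ (n:ℝ) - 1 := by
      have h1 : c * m ≤ n - 1 := Nat.div_mul_le_self (n-1) m
      have h3 : ((n - 1 : ℕ) : ℝ) = (n:ℝ) - 1 := by
        rw [Nat.cast_sub hn1]; norm_num
      have h2 : (c:ℝ) * (m:ℝ) ≤ (n:ℝ) - 1 := by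
        calc (c:ℝ) * (m:ℝ) = ((c * m : ℕ) : ℝ) := by push_cast; ring
          _ ≤ ((n - 1 : ℕ) : ℝ) := by exact_mod_cast h1
          _ = (n:ℝ) - 1 := h3
      have h4 : (c:ℝ) * r ≤ (c:ℝ) * (m:ℝ) := by
        have hc0 : (0:ℝ) ≤ (c:ℝ) := by positivity
        nlinarith
      linarith
    have hcn : (c:ℝ) ≤ (n:ℝ) - 1 := by
      have h1 : c ≤ n - 1 := Nat.div_le_self (n-1) m
      have h2 : ((c : ℕ) : ℝ) ≤ ((n - 1 : ℕ) : ℝ) := by exact_mod_cast h1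
      have h3 : ((n - 1 : ℕ) : ℝ) = (n:ℝ) - 1 := by
        rw [Nat.cast_sub hn1]; norm_num
      rw [h3] at h2
      exact h2
    have hfin1 : L * (((c:ℝ) * r) + (n:ℝ) + ((c:ℝ) * r)) ≤ L * (3 * (n:ℝ) - 2) := by
      refine mul_le_mul_of_nonneg_left ?_ hL0.le
      linarith
    have hfin2 : ((c:ℝ) + 1) * L ≤ (n:ℝ) * L := by
      have : (c:ℝ) + 1 ≤ (n:ℝ) := by linarith
      nlinarith
    calc ∑ j ∈ Finset.range n, ((w j).length : ℝ) ≤ _ := hexpand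
      _ ≤ L * (3 * (n:ℝ) - 2) + (n:ℝ) * L := by linarith
      _ ≤ 4 * L * (n:ℝ) := by nlinarith
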